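/- arXiv:1009.2048 — 4 statements merged into one kernel-verified Lean document; each statement's English description precedes it below -/
import Mathlib

section
/- Let (Y_i)_{i=1}^n be i.i.d. real random variables with mean m and variance v, let ψ : ℝ → ℝ be measurable with ψ(x) ≤ log(1 + x + x²/2) for all x, let α > 0, θ ∈ ℝ, and define r(θ) = (1/(αn)) Σ_{i=1}^n ψ(α(Y_i - θ)). Then E[exp(α n r(θ))] ≤ (1 + α(m-θ) + (α²/2)(v + (m-θ)²))^n ≤ exp(n α(m-θ) + (n α²/2)(v + (m-θ)²)). -/
/-!
Since `exp ∘ ψ ≤ 1 + x + x²/2`, each factor `E[exp ψ(α(Yᵢ - θ))]` is at most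
`1 + α(m - θ) + α²/2 · E[(Y₁ - θ)²]`, and `E[(Y₁ - θ)²] = v + (m - θ)²`. Independence and
identical distribution turn `E[exp(α n r(θ))]` into the `n`-th power of one such factor, and
`1 + u ≤ eᵘ` gives the exponential bound.
-/

open MeasureTheory ProbabilityTheory Real

section

variable {Ω : Type*} {mΩ : MeasurableSpace Ω} {μ : Measure Ω} [IsProbabilityMeasure μ]

lemma integral_sub_const_sq {X : Ω → ℝ} (hX : MemLp X 2 μ) (c : ℝ) :
    ∫ ω, (X ω - c) ^ 2 ∂μ = Var[X; μ] + (μ[X] - c) ^ 2 := by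
  have hXc : MemLp (fun ω ↦ X ω - c) 2 μ := hX.sub (memLp_const c)
  have hmean : ∫ ω, (X ω - c) ∂μ = μ[X] - c := by
    rw [integral_sub (hX.integrable one_le_two) (integrable_const c)]
    simp
  rw [← variance_sub_const hX.aestronglyMeasurable c, variance_eq_sub hXc, hmean]
  simp

lemma integral_exp_comp_le_of_le_log {ψ : ℝ → ℝ}
    (hψ : ∀ x, ψ x ≤ log (1 + x + x ^ 2 / 2)) {W : Ω → ℝ} (hW : MemLp W 2 μ) :
    ∫ ω, exp (ψ (W ω)) ∂μ ≤ 1 + μ[W] + (∫ ω, W ω ^ 2 ∂μ) / 2 := by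
  have hpointwise : ∀ x, exp (ψ x) ≤ 1 + x + x ^ 2 / 2 := fun x ↦
    (le_log_iff_exp_le (by nlinarith [sq_nonneg (1 + x)])).mp (hψ x)
  have hW1 : Integrable W μ := hW.integrable one_le_two
  have hW01 : Integrable (fun ω ↦ 1 + W ω) μ := (integrable_const 1).add hW1
  have hW2 : Integrable (fun ω ↦ W ω ^ 2 / 2) μ := hW.integrable_sq.div_const 2
  calc ∫ ω, exp (ψ (W ω)) ∂μ ≤ ∫ ω, (1 + W ω + W ω ^ 2 / 2) ∂μ :=
        integral_mono_of_nonneg (.of_forall fun ω ↦ (exp_pos _).le)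
          (hW01.add hW2) (.of_forall fun ω ↦ hpointwise (W ω))
    _ = 1 + μ[W] + (∫ ω, W ω ^ 2 ∂μ) / 2 := by
        rw [integral_add hW01 hW2,
          integral_add (integrable_const 1) hW1, integral_div]
        simp

lemma integral_exp_comp_mul_sub_le {ψ : ℝ → ℝ}
    (hψ : ∀ x, ψ x ≤ log (1 + x + x ^ 2 / 2)) {Y : Ω → ℝ} (hY : MemLp Y 2 μ) (α θ : ℝ) :
    ∫ ω, exp (ψ (α * (Y ω - θ))) ∂μ
      ≤ 1 + α * (μ[Y] - θ) + α ^ 2 / 2 * (Var[Y; μ] + (μ[Y] - θ) ^ 2) := by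
  have hW : MemLp (fun ω ↦ α * (Y ω - θ)) 2 μ := (hY.sub (memLp_const θ)).const_mul α
  have hmean : ∫ ω, α * (Y ω - θ) ∂μ = α * (μ[Y] - θ) := by
    rw [integral_const_mul, integral_sub (hY.integrable one_le_two) (integrable_const θ)]
    simp
  have hsq : ∫ ω, (α * (Y ω - θ)) ^ 2 ∂μ = α ^ 2 * (Var[Y; μ] + (μ[Y] - θ) ^ 2) := by
    simp_rw [mul_pow]
    rw [integral_const_mul, integral_sub_const_sq hY]
  refine (integral_exp_comp_le_of_le_log hψ hW).trans_eq ?_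
  rw [hmean, hsq]
  ring

end

lemma pow_le_exp_nat_mul_sub_one {B : ℝ} (hB : 0 ≤ B) (n : ℕ) :
    B ^ n ≤ exp (n * (B - 1)) := by
  rw [exp_nat_mul]
  exact pow_le_pow_left₀ hB (by linarith [add_one_le_exp (B - 1)]) n

theorem stmt_2 {Ω : Type*} [MeasureSpace Ω] [IsProbabilityMeasure (ℙ : Measure Ω)]
    (n : ℕ) (hn : 0 < n) (Y : Fin n → Ω → ℝ)
    (hmeas : ∀ i, Measurable (Y i))
    (hindep : iIndepFun Y ℙ)
    (hident : ∀ i, IdentDistrib (Y i) (Y ⟨0, hn⟩) ℙ ℙ)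
    (hL2 : MemLp (Y ⟨0, hn⟩) 2 ℙ)
    (m v : ℝ) (hm : ∫ ω, Y ⟨0, hn⟩ ω ∂ℙ = m)
    (hv : ∫ ω, (Y ⟨0, hn⟩ ω - m) ^ 2 ∂ℙ = v)
    (ψ : ℝ → ℝ) (hψmeas : Measurable ψ)
    (hψ : ∀ x : ℝ, ψ x ≤ Real.log (1 + x + x ^ 2 / 2))
    (α : ℝ) (hα : 0 < α) (θ : ℝ)
    (r : Ω → ℝ)
    (hr : ∀ ω, r ω = (1 / (α * n)) * ∑ i, ψ (α * (Y i ω - θ))) :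
    (∫ ω, Real.exp (α * n * r ω) ∂ℙ)
        ≤ (1 + α * (m - θ) + α ^ 2 / 2 * (v + (m - θ) ^ 2)) ^ n ∧
      (1 + α * (m - θ) + α ^ 2 / 2 * (v + (m - θ) ^ 2)) ^ n
        ≤ Real.exp (n * (α * (m - θ)) + n * α ^ 2 / 2 * (v + (m - θ) ^ 2)) := by
  have hvar : Var[Y ⟨0, hn⟩; ℙ] = v := by
    rw [variance_eq_integral hL2.aemeasurable, hm, hv]
  have hg : Measurable fun y ↦ ψ (α * (y - θ)) := by fun_prop
  have hsum : ∀ ω, α * n * r ω = ∑ i, ψ (α * (Y i ω - θ)) := fun ω ↦ by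
    rw [hr ω]
    field_simp
  have hproduct : ∫ ω, exp (α * n * r ω) ∂ℙ
      = (∫ ω, exp (ψ (α * (Y ⟨0, hn⟩ ω - θ))) ∂ℙ) ^ n := by
    have := mgf_sum_of_identDistrib (X := fun i ω ↦ ψ (α * (Y i ω - θ)))
      (fun i ↦ hg.comp (hmeas i))
      (hindep.comp (fun _ ↦ _) fun _ ↦ hg)
      (fun i _ j _ ↦ ((hident i).trans (hident j).symm).comp hg) (Finset.mem_univ ⟨0, hn⟩) 1
    simpa [mgf, hsum, Finset.sum_apply] using this
  have hfactor := integral_exp_comp_mul_sub_le (μ := ℙ) hψ hL2 α θ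
  rw [hm, hvar] at hfactor
  have hB : 0 ≤ 1 + α * (m - θ) + α ^ 2 / 2 * (v + (m - θ) ^ 2) := by
    nlinarith [sq_nonneg (1 + α * (m - θ)), mul_nonneg (sq_nonneg α) (hvar ▸ variance_nonneg _ ℙ)]
  refine ⟨hproduct ▸ pow_le_pow_left₀ (integral_nonneg fun _ ↦ (exp_pos _).le) hfactor n, ?_⟩
  exact (pow_le_exp_nat_mul_sub_one hB n).trans_eq (by ring_nf)
end

section
/- Let I be a finite index set of size p ≥ 2 and (Y_i)_{i∈I} i.i.d. with mean m, variance v and kurtosis κ < ∞. Then Σ over pairs {i<j}, {s<t} in I of E[((Y_i - Y_j)² - 2v)((Y_s - Y_t)² - 2v)] = p(p-1)²(κ - 1 + 2/(p-1)) v². -/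
open MeasureTheory ProbabilityTheory Finset

/-!
Centre the variables, `X i = Y i - m`, and split
`(X i - X j) ^ 2 - 2 v = (X i ^ 2 - v) + (X j ^ 2 - v) - 2 X i X j` into three centred terms.
Expanding a product of two such sums gives nine integrals; by independence every one in which
some index occurs only once, carrying a centred factor, vanishes. What survives is
`E[(X k ^ 2 - v) ^ 2] = (κ - 1) v ^ 2` for each index shared by `{i, j}` and `{s, t}`, and
`4 E[X i ^ 2 X j ^ 2] = 4 v ^ 2` when the two pairs coincide. Hence the summand is
`(κ - 1) v ^ 2 |{i, j} ∩ {s, t}| + 4 v ^ 2 [{i, j} = {s, t}]`; a fixed pair meets the others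
`2 (p - 1)` times in total and there are `p (p - 1) / 2` pairs.
-/

section

variable {Ω ι : Type*} {mΩ : MeasurableSpace Ω} {μ : Measure Ω}

instance ENNReal.holderTriple_four_four_two : ENNReal.HolderTriple 4 4 2 where
  inv_add_inv_eq_inv := by
    rw [← two_mul, show (4 : ENNReal) = 2 * 2 by norm_num, ENNReal.mul_inv (by simp) (by simp),
      ← mul_assoc, ENNReal.mul_inv_cancel (by simp) (by simp), one_mul]

theorem integral_mul_add_add [IsFiniteMeasure μ] {f g₁ g₂ g₃ : Ω → ℝ} (hf : MemLp f 2 μ)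
    (hg₁ : MemLp g₁ 2 μ) (hg₂ : MemLp g₂ 2 μ) (hg₃ : MemLp g₃ 2 μ) :
    ∫ ω, f ω * (g₁ ω + g₂ ω + g₃ ω) ∂μ =
      ∫ ω, f ω * g₁ ω ∂μ + ∫ ω, f ω * g₂ ω ∂μ + ∫ ω, f ω * g₃ ω ∂μ := by
  simp only [mul_add]
  rw [integral_add, integral_add]
  exacts [hf.integrable_mul hg₁, hf.integrable_mul hg₂,
    (hf.integrable_mul hg₁).add (hf.integrable_mul hg₂), hf.integrable_mul hg₃]

theorem integral_add_add_mul_add_add [IsFiniteMeasure μ] {f₁ f₂ f₃ g₁ g₂ g₃ : Ω → ℝ}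
    (hf₁ : MemLp f₁ 2 μ) (hf₂ : MemLp f₂ 2 μ) (hf₃ : MemLp f₃ 2 μ)
    (hg₁ : MemLp g₁ 2 μ) (hg₂ : MemLp g₂ 2 μ) (hg₃ : MemLp g₃ 2 μ) :
    ∫ ω, (f₁ ω + f₂ ω + f₃ ω) * (g₁ ω + g₂ ω + g₃ ω) ∂μ =
      (∫ ω, f₁ ω * g₁ ω ∂μ + ∫ ω, f₁ ω * g₂ ω ∂μ + ∫ ω, f₁ ω * g₃ ω ∂μ) +
      (∫ ω, f₂ ω * g₁ ω ∂μ + ∫ ω, f₂ ω * g₂ ω ∂μ + ∫ ω, f₂ ω * g₃ ω ∂μ) +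
      (∫ ω, f₃ ω * g₁ ω ∂μ + ∫ ω, f₃ ω * g₂ ω ∂μ + ∫ ω, f₃ ω * g₃ ω ∂μ) := by
  have hg : MemLp (fun ω => g₁ ω + g₂ ω + g₃ ω) 2 μ := (hg₁.add hg₂).add hg₃
  simp only [add_mul]
  rw [integral_add, integral_add, integral_mul_add_add hf₁ hg₁ hg₂ hg₃,
    integral_mul_add_add hf₂ hg₁ hg₂ hg₃, integral_mul_add_add hf₃ hg₁ hg₂ hg₃]
  exacts [hf₁.integrable_mul hg, hf₂.integrable_mul hg,
    (hf₁.integrable_mul hg).add (hf₂.integrable_mul hg), hf₃.integrable_mul hg]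

theorem measurable_iSup_comap_of_mem {X : ι → Ω → ℝ} {T : Set ι} {i : ι} (hi : i ∈ T) :
    Measurable[⨆ j ∈ T, (borel ℝ).comap (X j)] (X i) :=
  measurable_iff_comap_le.mpr (le_iSup₂_of_le i hi le_rfl)

namespace ProbabilityTheory

variable {X : ι → Ω → ℝ}

theorem iIndepFun.integral_comp_mul_eq_mul_integral_of_notMem (hX : ∀ i, Measurable (X i))
    (hind : iIndepFun X μ) {k : ι} {T : Set ι} (hk : k ∉ T) {φ : ℝ → ℝ} (hφ : Measurable φ)
    {g : Ω → ℝ} (hg : Measurable[⨆ i ∈ T, (borel ℝ).comap (X i)] g) :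
    ∫ ω, φ (X k ω) * g ω ∂μ = (∫ ω, φ (X k ω) ∂μ) * ∫ ω, g ω ∂μ := by
  have hindep : Indep (⨆ i ∈ ({k} : Set ι), (borel ℝ).comap (X i))
      (⨆ i ∈ T, (borel ℝ).comap (X i)) μ :=
    indep_iSup_of_disjoint (fun i => (hX i).comap_le) hind.iIndep
      (Set.disjoint_singleton_left.mpr hk)
  have hφg : IndepFun (fun ω => φ (X k ω)) g μ := by
    rw [IndepFun_iff_Indep]
    refine indep_of_indep_of_le_right (indep_of_indep_of_le_left hindep ?_) hg.comap_le
    exact (hφ.comp (measurable_iSup_comap_of_mem (Set.mem_singleton k))).comap_le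
  exact hφg.integral_mul_eq_mul_integral (hφ.comp (hX k)).aestronglyMeasurable
    (hg.mono (iSup₂_le fun i _ => (hX i).comap_le) le_rfl).aestronglyMeasurable

end ProbabilityTheory

structure IndepCenteredWithKurtosis (X : ι → Ω → ℝ) (μ : Measure Ω) (v κ : ℝ) : Prop where
  measurable : ∀ i, Measurable (X i)
  indep : iIndepFun X μ
  memLp_four : ∀ i, MemLp (X i) 4 μ
  integral_eq_zero : ∀ i, ∫ ω, X i ω ∂μ = 0
  integral_sq : ∀ i, ∫ ω, X i ω ^ 2 ∂μ = v
  integral_pow_four : ∀ i, ∫ ω, X i ω ^ 4 ∂μ = κ * v ^ 2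

section Pairs
variable [Fintype ι] [LinearOrder ι]

theorem sum_pairs_ite_eq_add_ite_eq (x : ι) :
    ∑ s, ∑ t ∈ univ.filter (fun t => s < t),
        ((if x = s then 1 else 0) + (if x = t then 1 else 0) : ℝ) = Fintype.card ι - 1 := by
  calc _ = ∑ y, ((if x < y then 1 else 0) + (if y < x then 1 else 0) : ℝ) := by
        simp [sum_add_distrib, sum_ite_eq]
    _ = ∑ y, (1 - if y = x then 1 else 0 : ℝ) := by
        refine sum_congr rfl fun y _ => ?_
        split_ifs <;> first | order | norm_num
    _ = Fintype.card ι - 1 := by simp [sum_sub_distrib]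

theorem sum_pairs_ite_sym2_eq {i j : ι} (hij : i < j) :
    ∑ s, ∑ t ∈ univ.filter (fun t => s < t), (if s(i, j) = s(s, t) then 1 else 0 : ℝ) = 1 := by
  have h : ∀ s t, s < t → (s(i, j) = s(s, t) ↔ i = s ∧ j = t) := fun s t hst => by
    rw [Sym2.eq_iff]
    constructor
    · rintro (h | ⟨rfl, rfl⟩)
      · exact h
      · exact absurd (hij.trans hst) (lt_irrefl _)
    · exact Or.inl
  calc _ = ∑ s, ∑ t ∈ univ.filter (fun t => s < t),
        (if i = s then if j = t then 1 else 0 else 0 : ℝ) := by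
        refine sum_congr rfl fun s _ => sum_congr rfl fun t ht => ?_
        simp only [h s t (mem_filter.mp ht).2, ite_and]
    _ = 1 := by simp [sum_ite_eq, hij]

-- Double counting: summing `sum_pairs_ite_eq_add_ite_eq` over `x` counts every pair twice.
theorem sum_card_filter_lt :
    ∑ i : ι, ((univ.filter (fun j => i < j)).card : ℝ) =
      Fintype.card ι * (Fintype.card ι - 1) / 2 := by
  have htwo : ∀ s t : ι, ∑ x : ι, ((if x = s then 1 else 0) + (if x = t then 1 else 0) : ℝ) = 2 :=
    fun s t => by simp [sum_add_distrib]; norm_num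
  calc ∑ i : ι, ((univ.filter (fun j => i < j)).card : ℝ)
      = (∑ s, ∑ t ∈ univ.filter (fun t => s < t), ∑ x : ι,
          ((if x = s then 1 else 0) + (if x = t then 1 else 0) : ℝ)) / 2 := by
        simp [htwo, ← sum_mul]
    _ = (∑ x : ι, ∑ s, ∑ t ∈ univ.filter (fun t => s < t),
          ((if x = s then 1 else 0) + (if x = t then 1 else 0) : ℝ)) / 2 := by
        rw [sum_comm]
        exact congrArg (· / 2) (sum_congr rfl fun x _ => sum_comm)
    _ = Fintype.card ι * (Fintype.card ι - 1) / 2 := by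
        simp [sum_pairs_ite_eq_add_ite_eq]
        ring

end Pairs

namespace IndepCenteredWithKurtosis

variable {X : ι → Ω → ℝ} {v κ : ℝ}

theorem of_identDistrib [IsProbabilityMeasure μ] {Y : ι → Ω → ℝ} {i₀ : ι}
    (hY : ∀ i, Measurable (Y i)) (hind : iIndepFun Y μ)
    (hident : ∀ i, IdentDistrib (Y i) (Y i₀) μ μ) (hL4 : MemLp (Y i₀) 4 μ) {m : ℝ}
    (hm : ∫ ω, Y i₀ ω ∂μ = m) (hv : ∫ ω, (Y i₀ ω - m) ^ 2 ∂μ = v)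
    (hκ : ∫ ω, (Y i₀ ω - m) ^ 4 ∂μ = κ * v ^ 2) :
    IndepCenteredWithKurtosis (fun i ω => Y i ω - m) μ v κ := by
  have hmoment : ∀ i (k : ℕ), ∫ ω, (Y i ω - m) ^ k ∂μ = ∫ ω, (Y i₀ ω - m) ^ k ∂μ := fun i k =>
    ((hident i).comp (u := fun y => (y - m) ^ k) (by fun_prop)).integral_eq
  refine ⟨fun i => (hY i).sub_const m, hind.comp _ fun _ => measurable_id.sub_const m,
    fun i => ((hident i).symm.memLp_snd hL4).sub (memLp_const m), fun i => ?_,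
    fun i => (hmoment i 2).trans hv, fun i => (hmoment i 4).trans hκ⟩
  simpa [integral_sub (hL4.integrable (by norm_num)) (integrable_const m), hm] using hmoment i 1

theorem memLp_two_mul (h : IndepCenteredWithKurtosis X μ v κ) (a b : ι) :
    MemLp (fun ω => X a ω * X b ω) 2 μ :=
  (h.memLp_four b).mul' (h.memLp_four a)

theorem memLp_two_sq_sub [IsFiniteMeasure μ] (h : IndepCenteredWithKurtosis X μ v κ) (a : ι) :
    MemLp (fun ω => X a ω ^ 2 - v) 2 μ := by
  have h2 : MemLp (fun ω => X a ω * X a ω - v) 2 μ := (h.memLp_two_mul a a).sub (memLp_const v)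
  simpa only [sq] using h2

theorem integral_sq_sub_eq_zero [IsProbabilityMeasure μ] (h : IndepCenteredWithKurtosis X μ v κ)
    (a : ι) :
    ∫ ω, (X a ω ^ 2 - v) ∂μ = 0 := by
  rw [integral_sub (((h.memLp_four a).mono_exponent (by norm_num)).integrable_sq)
    (integrable_const v), h.integral_sq]
  simp

theorem integral_sq_sub_mul_sq_sub [IsProbabilityMeasure μ] [DecidableEq ι]
    (h : IndepCenteredWithKurtosis X μ v κ) (a b : ι) :
    ∫ ω, (X a ω ^ 2 - v) * (X b ω ^ 2 - v) ∂μ = if a = b then (κ - 1) * v ^ 2 else 0 := by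
  split_ifs with hab
  · subst hab
    calc ∫ ω, (X a ω ^ 2 - v) * (X a ω ^ 2 - v) ∂μ = Var[fun ω => X a ω ^ 2; μ] := by
          rw [variance_eq_integral ((h.measurable a).pow_const 2).aemeasurable, h.integral_sq]
          simp only [sq]
      _ = (κ - 1) * v ^ 2 := by
          rw [variance_eq_sub (by simpa only [sq] using h.memLp_two_mul a a)]
          simp only [Pi.pow_apply, ← pow_mul, h.integral_pow_four, h.integral_sq]
          ring
  · have hb := measurable_iSup_comap_of_mem (X := X) (Set.mem_singleton b)
    rw [h.indep.integral_comp_mul_eq_mul_integral_of_notMem h.measurable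
      (k := a) (T := {b}) (φ := fun x => x ^ 2 - v) (g := fun ω => X b ω ^ 2 - v) hab
      (by fun_prop) (by fun_prop), h.integral_sq_sub_eq_zero, zero_mul]

theorem integral_mul_eq_zero_of_notMem [IsProbabilityMeasure μ]
    (h : IndepCenteredWithKurtosis X μ v κ) {k : ι} {T : Set ι} (hk : k ∉ T) {g : Ω → ℝ}
    (hg : Measurable[⨆ i ∈ T, (borel ℝ).comap (X i)] g) :
    ∫ ω, X k ω * g ω ∂μ = 0 := by
  rw [h.indep.integral_comp_mul_eq_mul_integral_of_notMem h.measurable (φ := fun x => x) hk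
    measurable_id hg, h.integral_eq_zero, zero_mul]

theorem integral_sq_sub_mul_mul [IsProbabilityMeasure μ] (h : IndepCenteredWithKurtosis X μ v κ)
    (a : ι) {s t : ι} (hst : s ≠ t) :
    ∫ ω, (X a ω ^ 2 - v) * (X s ω * X t ω) ∂μ = 0 := by
  wlog hta : t ≠ a generalizing s t
  · simpa only [mul_comm (X s _)] using
      this hst.symm (by rintro rfl; exact hst (not_ne_iff.mp hta).symm)
  have ha := measurable_iSup_comap_of_mem (X := X) (show a ∈ ({a, s} : Set ι) by simp)
  have hs := measurable_iSup_comap_of_mem (X := X) (show s ∈ ({a, s} : Set ι) by simp)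
  calc ∫ ω, (X a ω ^ 2 - v) * (X s ω * X t ω) ∂μ
      = ∫ ω, X t ω * ((X a ω ^ 2 - v) * X s ω) ∂μ := by congr 1; ext; ring
    _ = 0 := h.integral_mul_eq_zero_of_notMem (T := {a, s}) (by simp [hta, hst.symm])
        (by fun_prop)

theorem integral_mul_mul_mul [IsProbabilityMeasure μ] [DecidableEq ι]
    (h : IndepCenteredWithKurtosis X μ v κ) {i j s t : ι} (hij : i ≠ j) (hst : s ≠ t) :
    ∫ ω, X i ω * X j ω * (X s ω * X t ω) ∂μ = if s(i, j) = s(s, t) then v ^ 2 else 0 := by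
  split_ifs with hpair
  · have hj := measurable_iSup_comap_of_mem (X := X) (Set.mem_singleton j)
    calc ∫ ω, X i ω * X j ω * (X s ω * X t ω) ∂μ = ∫ ω, X i ω ^ 2 * X j ω ^ 2 ∂μ := by
          rcases Sym2.eq_iff.mp hpair with ⟨rfl, rfl⟩ | ⟨rfl, rfl⟩ <;>
            exact integral_congr_ae (ae_of_all _ fun ω => by ring)
      _ = v ^ 2 := by
          rw [h.indep.integral_comp_mul_eq_mul_integral_of_notMem h.measurable
            (k := i) (T := {j}) (φ := fun x => x ^ 2) (g := fun ω => X j ω ^ 2) hij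
            (by fun_prop) (by fun_prop), h.integral_sq, h.integral_sq, sq]
  · wlog hi : i ∉ ({s, t} : Set ι) generalizing i j
    · by_cases hj : j ∈ ({s, t} : Set ι)
      · simp only [Set.mem_insert_iff, Set.mem_singleton_iff, not_not] at hi hj
        rcases hi with rfl | rfl <;> rcases hj with rfl | rfl <;> simp_all [Sym2.eq_swap]
      · simpa only [mul_comm (X j _)] using this hij.symm (by rwa [Sym2.eq_swap]) hj
    have hj := measurable_iSup_comap_of_mem (X := X) (show j ∈ ({j, s, t} : Set ι) by simp)
    have hs := measurable_iSup_comap_of_mem (X := X) (show s ∈ ({j, s, t} : Set ι) by simp)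
    have ht := measurable_iSup_comap_of_mem (X := X) (show t ∈ ({j, s, t} : Set ι) by simp)
    calc ∫ ω, X i ω * X j ω * (X s ω * X t ω) ∂μ
        = ∫ ω, X i ω * (X j ω * (X s ω * X t ω)) ∂μ := by congr 1; ext; ring
      _ = 0 := h.integral_mul_eq_zero_of_notMem (T := {j, s, t}) (by simp_all) (by fun_prop)

theorem integral_sqDiff_mul_sqDiff [IsProbabilityMeasure μ] [DecidableEq ι]
    (h : IndepCenteredWithKurtosis X μ v κ) {i j s t : ι} (hij : i ≠ j) (hst : s ≠ t) :
    ∫ ω, ((X i ω - X j ω) ^ 2 - 2 * v) * ((X s ω - X t ω) ^ 2 - 2 * v) ∂μ =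
      (κ - 1) * v ^ 2 * ((if i = s then 1 else 0) + (if i = t then 1 else 0) +
        ((if j = s then 1 else 0) + (if j = t then 1 else 0))) +
      4 * v ^ 2 * (if s(i, j) = s(s, t) then 1 else 0) := by
  have hsplit : ∀ a b ω, (X a ω - X b ω) ^ 2 - 2 * v =
      (X a ω ^ 2 - v) + (X b ω ^ 2 - v) + (-2) * (X a ω * X b ω) := by
    intros; ring
  have hW : ∀ a b, MemLp (fun ω => -2 * (X a ω * X b ω)) 2 μ := fun a b =>
    (h.memLp_two_mul a b).const_mul (-2)
  have hWU : ∀ a, ∫ ω, X i ω * X j ω * (X a ω ^ 2 - v) ∂μ = 0 := fun a => by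
    simpa only [mul_comm (X a _ ^ 2 - v)] using h.integral_sq_sub_mul_mul a hij
  simp_rw [hsplit]
  rw [integral_add_add_mul_add_add (h.memLp_two_sq_sub i) (h.memLp_two_sq_sub j) (hW i j)
    (h.memLp_two_sq_sub s) (h.memLp_two_sq_sub t) (hW s t)]
  simp only [mul_left_comm _ (-2 : ℝ), mul_assoc (-2 : ℝ), integral_const_mul,
    h.integral_sq_sub_mul_sq_sub, h.integral_sq_sub_mul_mul _ hst, hWU,
    h.integral_mul_mul_mul hij hst]
  split_ifs <;> ring

theorem sum_pairs_integral_sqDiff_mul_sqDiff [IsProbabilityMeasure μ] [Fintype ι]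
    [LinearOrder ι] (h : IndepCenteredWithKurtosis X μ v κ) :
    ∑ i, ∑ j ∈ univ.filter (fun j => i < j), ∑ s, ∑ t ∈ univ.filter (fun t => s < t),
      ∫ ω, ((X i ω - X j ω) ^ 2 - 2 * v) * ((X s ω - X t ω) ^ 2 - 2 * v) ∂μ =
      Fintype.card ι * (Fintype.card ι - 1) / 2 *
        ((κ - 1) * v ^ 2 * (2 * (Fintype.card ι - 1)) + 4 * v ^ 2) := by
  have hinner : ∀ i j : ι, i < j → ∑ s, ∑ t ∈ univ.filter (fun t => s < t),
      ∫ ω, ((X i ω - X j ω) ^ 2 - 2 * v) * ((X s ω - X t ω) ^ 2 - 2 * v) ∂μ =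
        (κ - 1) * v ^ 2 * (2 * (Fintype.card ι - 1)) + 4 * v ^ 2 := fun i j hij => by
    rw [sum_congr rfl fun s _ => sum_congr rfl fun t ht =>
      h.integral_sqDiff_mul_sqDiff hij.ne (mem_filter.mp ht).2.ne]
    have hi := sum_pairs_ite_eq_add_ite_eq i
    have hj := sum_pairs_ite_eq_add_ite_eq j
    simp only [sum_add_distrib] at hi hj
    simp only [mul_add, sum_add_distrib, ← mul_sum, sum_pairs_ite_sym2_eq hij]
    linear_combination (κ - 1) * v ^ 2 * (hi + hj)
  rw [← sum_card_filter_lt, sum_mul]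
  refine sum_congr rfl fun i _ => ?_
  rw [sum_congr rfl fun j hj => hinner i j (mem_filter.mp hj).2, sum_const, nsmul_eq_mul]

end IndepCenteredWithKurtosis

end

theorem stmt_8 {Ω : Type*} [MeasureSpace Ω] [IsProbabilityMeasure (ℙ : Measure Ω)]
    (p : ℕ) (hp : 2 ≤ p)
    (Y : Fin p → Ω → ℝ) (hmeas : ∀ i, Measurable (Y i))
    (hindep : iIndepFun Y ℙ)
    (hident : ∀ i, IdentDistrib (Y i) (Y ⟨0, by omega⟩) ℙ ℙ)
    (hL4 : MemLp (Y ⟨0, by omega⟩) 4 ℙ)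
    (m v κ : ℝ) (hm : ∫ ω, Y ⟨0, by omega⟩ ω ∂ℙ = m)
    (hv : ∫ ω, (Y ⟨0, by omega⟩ ω - m) ^ 2 ∂ℙ = v)
    (hκ : ∫ ω, (Y ⟨0, by omega⟩ ω - m) ^ 4 ∂ℙ = κ * v ^ 2) :
    ∑ i : Fin p, ∑ j ∈ Finset.univ.filter (fun j => i < j),
      ∑ s : Fin p, ∑ t ∈ Finset.univ.filter (fun t => s < t),
        ∫ ω, ((Y i ω - Y j ω) ^ 2 - 2 * v) * ((Y s ω - Y t ω) ^ 2 - 2 * v) ∂ℙ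
      = p * (p - 1) ^ 2 * (κ - 1 + 2 / ((p : ℝ) - 1)) * v ^ 2 := by
  have hsum := (IndepCenteredWithKurtosis.of_identDistrib hmeas hindep hident hL4 hm hv
    hκ).sum_pairs_integral_sqDiff_mul_sqDiff
  simp only [sub_sub_sub_cancel_right, Fintype.card_fin] at hsum
  rw [hsum]
  have hp1 : (p : ℝ) - 1 ≠ 0 := by
    have : (2 : ℝ) ≤ p := by exact_mod_cast hp
    linarith
  field_simp
  ring
end

section
/- For any estimator θ̂ : ℝⁿ → ℝ, any variance v > 0 and any η > 0, there exists a mean m ∈ {-η, η} such that, for an i.i.d. sample (Y_i)_{i=1}^n from the Gaussian N(m, v), either P(θ̂(Y) ≥ m + η) ≥ P(M ≥ m + η) or P(θ̂(Y) ≤ m - η) ≥ P(M ≤ m - η), where M = (1/n)Σ Y_i is the empirical mean. -/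
open MeasureTheory ProbabilityTheory Real

open scoped ENNReal NNReal

/-! Write `Pₘ` for the law of an i.i.d. `N(m, v)` sample and `M` for its mean. If the claim failed
for both means, the event `A = {θ̂ ≥ 0}` would satisfy `P₋η(A) < P₋η(M ≥ 0)` and
`P_η(Aᶜ) < P_η(M ≤ 0)`. But the likelihood ratio `dP_η / dP₋η = exp (2η ∑ yᵢ / v)` is `≥ 1` exactly
where `M ≥ 0`, so, as in the Neyman–Pearson lemma, the event `{M ≥ 0}` minimises
`P₋η(A) + P_η(Aᶜ)` over all events `A`; and `{M = 0}` is a Lebesgue-null hyperplane, so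
`P_η(M ≤ 0) = P_η(M < 0)`. -/

section Pi

variable {ι : Type*} [Fintype ι] {X : ι → Type*} [∀ i, MeasurableSpace (X i)]

theorem lintegral_fintype_prod_eq_prod (μ : ∀ i, Measure (X i)) [∀ i, SigmaFinite (μ i)]
    {f : ∀ i, X i → ℝ≥0∞} (hf : ∀ i, Measurable (f i)) :
    ∫⁻ x, ∏ i, f i (x i) ∂Measure.pi μ = ∏ i, ∫⁻ y, f i y ∂μ i := by
  classical
  have hF : Measurable fun x : ∀ i, X i => ∏ i, f i (x i) :=
    Finset.measurable_prod _ fun i _ => (hf i).comp (measurable_pi_apply i)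
  have marginal : ∀ (s : Finset ι) (x : ∀ i, X i),
      (∫⋯∫⁻_s, (fun x => ∏ i, f i (x i)) ∂μ) x
        = (∏ i ∈ s, ∫⁻ y, f i y ∂μ i) * ∏ i ∈ sᶜ, f i (x i) := by
    intro s
    induction s using Finset.induction with
    | empty => intro x; simp
    | @insert i s hi ih =>
      intro x
      have hprod (y : X i) : ∏ j ∈ sᶜ, f j (Function.update x i y j)
          = f i y * ∏ j ∈ (insert i s)ᶜ, f j (x j) := by
        rw [Finset.compl_insert, ← Finset.mul_prod_erase _ _ (Finset.mem_compl.mpr hi)]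
        congr 1
        · simp
        · exact Finset.prod_congr rfl fun j hj => by
            rw [Function.update_of_ne (Finset.ne_of_mem_erase hj)]
      simp_rw [lmarginal_insert _ hF hi, ih, hprod]
      rw [lintegral_const_mul _ ((hf i).mul_const _), lintegral_mul_const _ (hf i),
        Finset.prod_insert hi]
      ring
  rcases isEmpty_or_nonempty (∀ i, X i) with hempty | ⟨⟨x⟩⟩
  · obtain ⟨i, hi⟩ := isEmpty_pi.mp hempty
    rw [lintegral_of_isEmpty, Finset.prod_eq_zero (Finset.mem_univ i) (lintegral_of_isEmpty _ _)]
  · rw [lintegral_eq_lmarginal_univ x, marginal]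
    simp

theorem Measure.pi_withDensity (μ : ∀ i, Measure (X i)) [∀ i, SigmaFinite (μ i)]
    {f : ∀ i, X i → ℝ≥0∞} (hf : ∀ i, Measurable (f i))
    [∀ i, SigmaFinite ((μ i).withDensity (f i))] :
    Measure.pi (fun i => (μ i).withDensity (f i))
      = (Measure.pi μ).withDensity fun x => ∏ i, f i (x i) := by
  refine Measure.pi_eq fun s hs => ?_
  rw [withDensity_apply _ (MeasurableSet.univ_pi hs), Measure.restrict_pi_pi,
    lintegral_fintype_prod_eq_prod _ hf]
  exact Finset.prod_congr rfl fun i _ => (withDensity_apply _ (hs i)).symm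

end Pi

theorem measure_add_measure_compl_le_of_dominates {α : Type*} [MeasurableSpace α]
    {P Q : Measure α} {A B : Set α} (hA : MeasurableSet A) (hB : MeasurableSet B)
    (hPQ : ∀ S ⊆ B, MeasurableSet S → P S ≤ Q S) (hQP : ∀ S ⊆ Bᶜ, MeasurableSet S → Q S ≤ P S) :
    P B + Q Bᶜ ≤ P A + Q Aᶜ := by
  have hBA : B \ A = Aᶜ ∩ B := by ext; simp [and_comm]
  have hBcA : Bᶜ ∩ A = A \ B := by ext; simp [and_comm]
  have hBcA_sdiff : Bᶜ \ A = Aᶜ \ B := by ext; simp [and_comm]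
  calc P B + Q Bᶜ = P (A ∩ B) + P (B \ A) + (Q (Bᶜ ∩ A) + Q (Bᶜ \ A)) := by
        rw [← measure_inter_add_sdiff B hA, ← measure_inter_add_sdiff Bᶜ hA, Set.inter_comm B]
    _ ≤ P (A ∩ B) + Q (B \ A) + (P (Bᶜ ∩ A) + Q (Bᶜ \ A)) := by
        gcongr _ + ?_ + (?_ + _)
        · exact hPQ _ Set.sdiff_subset (hB.diff hA)
        · exact hQP _ Set.inter_subset_left (hB.compl.inter hA)
    _ = P A + Q Aᶜ := by
        rw [hBA, hBcA, hBcA_sdiff, ← measure_inter_add_sdiff A hB, ← measure_inter_add_sdiff Aᶜ hB]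
        ring

section GaussianShift

variable {ι : Type*} [Fintype ι]

theorem gaussianReal_pi_eq_withDensity (m : ℝ) {v : ℝ≥0} (hv : v ≠ 0) :
    Measure.pi (fun _ : ι => gaussianReal m v)
      = volume.withDensity fun x => ∏ i, gaussianPDF m v (x i) := by
  have : SigmaFinite (volume.withDensity (gaussianPDF m v)) := by
    rw [← gaussianReal_of_var_ne_zero m hv]
    infer_instance
  simp_rw [gaussianReal_of_var_ne_zero m hv]
  exact Measure.pi_withDensity _ fun _ => measurable_gaussianPDF m v

theorem gaussianReal_pi_absolutelyContinuous (m : ℝ) {v : ℝ≥0} (hv : v ≠ 0) :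
    Measure.pi (fun _ : ι => gaussianReal m v) ≪ volume := by
  rw [gaussianReal_pi_eq_withDensity m hv]
  exact withDensity_absolutelyContinuous _ _

theorem volume_setOf_sum_eq_zero [Nonempty ι] :
    volume {x : ι → ℝ | ∑ i, x i = 0} = 0 := by
  let L : (ι → ℝ) →ₗ[ℝ] ℝ := ∑ i, LinearMap.proj i
  have hL : {x : ι → ℝ | ∑ i, x i = 0} = LinearMap.ker L := by
    ext x; simp [L]
  have hker : LinearMap.ker L ≠ ⊤ := fun h => by
    have := h ▸ Submodule.mem_top (x := fun _ : ι => (1 : ℝ))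
    simp [L] at this
  rw [hL]
  exact Measure.addHaar_submodule volume _ hker

theorem prod_gaussianPDF_neg_le {v : ℝ≥0} (hv : v ≠ 0) (η : ℝ) (x : ι → ℝ)
    (hx : 0 ≤ η * ∑ i, x i) :
    ∏ i, gaussianPDF (-η) v (x i) ≤ ∏ i, gaussianPDF η v (x i) := by
  have hv₀ : (v : ℝ) ≠ 0 := NNReal.coe_ne_zero.mpr hv
  have ratio (y : ℝ) :
      gaussianPDFReal η v y = gaussianPDFReal (-η) v y * exp (2 / v * (η * y)) := by
    simp only [gaussianPDFReal]
    rw [mul_assoc _ (exp _), ← exp_add]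
    congr 2
    field_simp
    ring
  simp only [gaussianPDF, ratio]
  rw [← ENNReal.ofReal_prod_of_nonneg fun i _ => gaussianPDFReal_nonneg _ _ _,
    ← ENNReal.ofReal_prod_of_nonneg fun i _ =>
      mul_nonneg (gaussianPDFReal_nonneg _ _ _) (exp_pos _).le, Finset.prod_mul_distrib,
    ← exp_sum, ← Finset.mul_sum, ← Finset.mul_sum]
  gcongr
  exact le_mul_of_one_le_right (Finset.prod_nonneg fun i _ => gaussianPDFReal_nonneg _ _ _)
    (one_le_exp (by positivity))

theorem gaussianReal_pi_neg_le {v : ℝ≥0} (hv : v ≠ 0) (η : ℝ) {S : Set (ι → ℝ)}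
    (hS : MeasurableSet S) (hSη : ∀ x ∈ S, 0 ≤ η * ∑ i, x i) :
    Measure.pi (fun _ : ι => gaussianReal (-η) v) S
      ≤ Measure.pi (fun _ : ι => gaussianReal η v) S := by
  rw [gaussianReal_pi_eq_withDensity _ hv, gaussianReal_pi_eq_withDensity _ hv,
    withDensity_apply _ hS, withDensity_apply _ hS]
  exact setLIntegral_mono
    (Finset.measurable_prod _ fun i _ => (measurable_gaussianPDF η v).comp (measurable_pi_apply i))
    fun x hx => prod_gaussianPDF_neg_le hv η x (hSη x hx)

theorem gaussianReal_pi_add_le [Nonempty ι] {v : ℝ≥0} (hv : v ≠ 0) {η : ℝ} (hη : 0 ≤ η)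
    {A : Set (ι → ℝ)} (hA : MeasurableSet A) :
    Measure.pi (fun _ : ι => gaussianReal (-η) v) {x | 0 ≤ ∑ i, x i}
        + Measure.pi (fun _ : ι => gaussianReal η v) {x | ∑ i, x i ≤ 0}
      ≤ Measure.pi (fun _ : ι => gaussianReal (-η) v) A
        + Measure.pi (fun _ : ι => gaussianReal η v) Aᶜ := by
  have hsum : Measurable fun x : ι → ℝ => ∑ i, x i :=
    Finset.measurable_sum _ fun i _ => measurable_pi_apply i
  have hB : MeasurableSet {x : ι → ℝ | 0 ≤ ∑ i, x i} := measurableSet_le measurable_const hsum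
  have hnonpos : {x : ι → ℝ | ∑ i, x i ≤ 0} \ {x | ∑ i, x i = 0} = {x | 0 ≤ ∑ i, x i}ᶜ := by
    ext x
    simp only [Set.mem_sdiff, Set.mem_ofPred_eq, Set.mem_compl_iff, not_le]
    exact lt_iff_le_and_ne.symm
  rw [← measure_sdiff_null (gaussianReal_pi_absolutelyContinuous η hv volume_setOf_sum_eq_zero),
    hnonpos]
  refine measure_add_measure_compl_le_of_dominates hA hB
    (fun S hSB hS => gaussianReal_pi_neg_le hv η hS fun x hx => mul_nonneg hη (hSB hx))
    fun S hSB hS => ?_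
  simpa using gaussianReal_pi_neg_le hv (-η) hS fun x hx =>
    mul_nonneg_of_nonpos_of_nonpos (neg_nonpos.mpr hη)
      (not_le.mp (show ¬0 ≤ ∑ i, x i from hSB hx)).le

end GaussianShift

theorem stmt_9 (n : ℕ) (hn : 0 < n)
    (θhat : (Fin n → ℝ) → ℝ) (hθhat : Measurable θhat)
    (v : ℝ) (hv : 0 < v) (η : ℝ) (hη : 0 < η) :
    ∃ m ∈ ({-η, η} : Set ℝ),
      (Measure.pi fun _ : Fin n => gaussianReal m v.toNNReal)
          {y | m + η ≤ θhat y}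
        ≥ (Measure.pi fun _ : Fin n => gaussianReal m v.toNNReal)
          {y | m + η ≤ (∑ i, y i) / n} ∨
      (Measure.pi fun _ : Fin n => gaussianReal m v.toNNReal)
          {y | θhat y ≤ m - η}
        ≥ (Measure.pi fun _ : Fin n => gaussianReal m v.toNNReal)
          {y | (∑ i, y i) / n ≤ m - η} := by
  have : Nonempty (Fin n) := ⟨⟨0, hn⟩⟩
  have hn' : (0 : ℝ) < n := Nat.cast_pos.mpr hn
  by_contra! hcon
  obtain ⟨hlow, -⟩ := hcon (-η) (by simp)
  obtain ⟨-, hhigh⟩ := hcon η (by simp)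
  simp only [neg_add_cancel, sub_self, le_div_iff₀ hn', div_le_iff₀ hn', zero_mul] at hlow hhigh
  have hθ_compl : {y | 0 ≤ θhat y}ᶜ ⊆ {y | θhat y ≤ 0} := fun y hy =>
    (not_le.mp (show ¬0 ≤ θhat y from hy)).le
  exact (gaussianReal_pi_add_le (Real.toNNReal_pos.mpr hv).ne' hη.le
    (measurableSet_le measurable_const hθhat)).not_gt
    (ENNReal.add_lt_add hlow ((measure_mono hθ_compl).trans_lt hhigh))
end

section
/- For any v > 0, n ≥ 1 and η > 0 with v ≤ n²η², there exists a probability distribution on ℝ with mean 0 and variance v such that the empirical mean M of an i.i.d. sample of size n from it satisfies P(M ≥ η) ≥ (v/(2nη²))(1 - v/(n²η²))^{n-1}. -/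
open MeasureTheory ProbabilityTheory Real

/-! The witness is the law with mass `p = v / (2 n² η²)` at `± n η` and `1 - 2p` at `0`. The sample
mean equals `η` whenever exactly one observation is `n η` and all others are `0`; these `n` events
are disjoint and each has probability `p (1 - 2p)^(n-1)`. -/

noncomputable def symmThreePoint (a p : ℝ) : Measure ℝ :=
  ENNReal.ofReal p • Measure.dirac a + ENNReal.ofReal p • Measure.dirac (-a)
    + ENNReal.ofReal (1 - 2 * p) • Measure.dirac 0

section symmThreePoint

variable {a p : ℝ}

lemma isProbabilityMeasure_symmThreePoint (hp : 0 ≤ p) (hp2 : 2 * p ≤ 1) :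
    IsProbabilityMeasure (symmThreePoint a p) := by
  constructor
  simp only [symmThreePoint, Measure.add_apply, Measure.smul_apply, measure_univ, smul_eq_mul,
    mul_one]
  rw [← ENNReal.ofReal_add hp hp, ← ENNReal.ofReal_add (by positivity) (by linarith)]
  norm_num [two_mul]

lemma integral_symmThreePoint {E : Type*} [NormedAddCommGroup E] [NormedSpace ℝ E]
    [CompleteSpace E] (hp : 0 ≤ p) (hp2 : 2 * p ≤ 1) (f : ℝ → E) :
    ∫ x, f x ∂symmThreePoint a p = p • f a + p • f (-a) + (1 - 2 * p) • f 0 := by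
  have hint (b c : ℝ) : Integrable f (ENNReal.ofReal c • Measure.dirac b) :=
    (integrable_dirac (by simp)).smul_measure ENNReal.ofReal_ne_top
  rw [symmThreePoint, integral_add_measure ((hint _ _).add_measure (hint _ _)) (hint _ _),
    integral_add_measure (hint _ _) (hint _ _)]
  simp [ENNReal.toReal_ofReal hp, ENNReal.toReal_ofReal (by linarith : 0 ≤ 1 - 2 * p)]

lemma symmThreePoint_singleton_self (ha : a ≠ 0) :
    symmThreePoint a p {a} = ENNReal.ofReal p := by
  have hneg : -a ≠ a := fun h => ha (by linarith)
  simp [symmThreePoint, hneg, ha.symm]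

lemma symmThreePoint_singleton_zero (ha : a ≠ 0) :
    symmThreePoint a p {0} = ENNReal.ofReal (1 - 2 * p) := by
  simp [symmThreePoint, ha]

end symmThreePoint

namespace MeasureTheory.Measure

variable {ι α : Type*} [Fintype ι] [DecidableEq ι] [MeasurableSpace α] [Zero α]
  (μ : Measure α) [SigmaFinite μ]

lemma pi_singleton_pi_single (i : ι) (a : α) :
    Measure.pi (fun _ => μ) {Pi.single i a} = μ {a} * μ {0} ^ (Fintype.card ι - 1) := by
  have hoff : ∀ j ∈ ({i}ᶜ : Finset ι), μ {(Pi.single i a : ι → α) j} = μ {0} := fun j hj => by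
    rw [Pi.single_eq_of_ne (by simpa using hj)]
  rw [← Set.univ_pi_singleton, pi_pi, Fintype.prod_eq_mul_prod_compl i, Pi.single_eq_same,
    Finset.prod_congr rfl hoff, Finset.prod_const, Finset.card_compl, Finset.card_singleton]

lemma card_mul_le_pi_of_pi_single_mem [MeasurableSingletonClass α] {a : α} (ha : a ≠ 0)
    {s : Set (ι → α)} (hs : ∀ i, Pi.single i a ∈ s) :
    Fintype.card ι * (μ {a} * μ {0} ^ (Fintype.card ι - 1)) ≤ Measure.pi (fun _ => μ) s := by
  classical
  have hinj : Function.Injective fun i : ι => Pi.single i a := fun i j hij => by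
    by_contra hne
    simpa [Pi.single_eq_of_ne hne, ha] using congrFun hij i
  calc Fintype.card ι * (μ {a} * μ {0} ^ (Fintype.card ι - 1))
      = ∑ i, Measure.pi (fun _ => μ) {Pi.single i a} := by
        rw [Finset.sum_congr rfl fun i _ => pi_singleton_pi_single (ι := ι) μ i a,
          Finset.sum_const, Finset.card_univ, nsmul_eq_mul]
    _ = Measure.pi (fun _ => μ) ↑(Finset.univ.image fun i : ι => Pi.single i a) := by
        rw [← sum_measure_singleton, Finset.sum_image hinj.injOn]
    _ ≤ Measure.pi (fun _ => μ) s := measure_mono (by simpa [Set.range_subset_iff] using hs)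

end MeasureTheory.Measure

theorem stmt_10_general (v : ℝ) (hv : 0 < v) (n : ℕ) (η : ℝ)
    (hvn : v ≤ n ^ 2 * η ^ 2) :
    ∃ μ : Measure ℝ, IsProbabilityMeasure μ ∧
      (∫ x, x ∂μ) = 0 ∧ (∫ x, x ^ 2 ∂μ) = v ∧
      (Measure.pi fun _ : Fin n => μ) {y | η ≤ (∑ i, y i) / n}
        ≥ ENNReal.ofReal
            (v / (2 * n * η ^ 2) * (1 - v / (n ^ 2 * η ^ 2)) ^ (n - 1)) := by
  have hD : 0 < (n : ℝ) ^ 2 * η ^ 2 := hv.trans_le hvn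
  have ha : (n : ℝ) * η ≠ 0 := by rw [← sq_pos_iff, mul_pow]; exact hD
  have hn : (n : ℝ) ≠ 0 := left_ne_zero_of_mul ha
  have hη : η ≠ 0 := right_ne_zero_of_mul ha
  set p := v / (2 * (n ^ 2 * η ^ 2)) with hp_def
  have hp : 0 ≤ p := by positivity
  have hp2 : 2 * p ≤ 1 := by
    rw [hp_def, mul_div_assoc', mul_div_mul_left _ _ two_ne_zero, div_le_one hD]
    exact hvn
  have hμ := isProbabilityMeasure_symmThreePoint (a := n * η) hp hp2
  refine ⟨symmThreePoint (n * η) p, hμ, ?_, ?_, ?_⟩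
  · simp [integral_symmThreePoint hp hp2]
  · rw [integral_symmThreePoint hp hp2, hp_def]
    simp only [smul_eq_mul]
    field_simp
    ring
  · have hs (i : Fin n) : Pi.single i ((n : ℝ) * η) ∈ {y : Fin n → ℝ | η ≤ (∑ i, y i) / n} := by
      simp [hn]
    refine le_trans (le_of_eq ?_) (Measure.card_mul_le_pi_of_pi_single_mem _ ha hs)
    rw [symmThreePoint_singleton_self ha, symmThreePoint_singleton_zero ha, Fintype.card_fin,
      ← ENNReal.ofReal_pow (by linarith), ← ENNReal.ofReal_natCast, ← ENNReal.ofReal_mul hp,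
      ← ENNReal.ofReal_mul (by positivity)]
    congr 1
    rw [hp_def]
    field_simp

theorem stmt_10 (v : ℝ) (hv : 0 < v) (n : ℕ) (hn : 1 ≤ n) (η : ℝ) (hη : 0 < η)
    (hvn : v ≤ n ^ 2 * η ^ 2) :
    ∃ μ : Measure ℝ, IsProbabilityMeasure μ ∧
      (∫ x, x ∂μ) = 0 ∧ (∫ x, x ^ 2 ∂μ) = v ∧
      (Measure.pi fun _ : Fin n => μ) {y | η ≤ (∑ i, y i) / n}
        ≥ ENNReal.ofReal
            (v / (2 * n * η ^ 2) * (1 - v / (n ^ 2 * η ^ 2)) ^ (n - 1)) :=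
  stmt_10_general v hv n η hvn
end
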